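/- Let k ≥ 1, α ∈ (0,1), and let P be a nonzero measure on a product 𝒳₁ × … × 𝒳ₖ of finite sets. Then min over θ ∈ Δ([k]) of H_{α,θ}(P) equals max over Q ∈ Δ(supp P) of [ min_{j∈[k]} H(Q_j) − (α/(1−α)) D(Q‖P) ]. -/

import Mathlib

open Finset

noncomputable section

/-- A probability distribution on a finite set. -/
def probVec {X : Type*} [Fintype X] (Q : X → ℝ) : Prop :=
  (∀ x, 0 ≤ Q x) ∧ ∑ x, Q x = 1

/-- Shannon entropy (base 2) of a measure on a finite set; `0 · log 0 = 0`. -/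
def shEnt {X : Type*} [Fintype X] (Q : X → ℝ) : ℝ :=
  -∑ x, Q x * Real.logb 2 (Q x)

/-- Kullback–Leibler divergence (base 2); terms with `Q x = 0` vanish. -/
def klD {X : Type*} [Fintype X] (Q P : X → ℝ) : ℝ :=
  ∑ x, Q x * Real.logb 2 (Q x / P x)

/-- `j`-th marginal of a measure on a finite product. -/
def marg {k : ℕ} {𝒳 : Fin k → Type*} [∀ j, Fintype (𝒳 j)] [∀ j, DecidableEq (𝒳 j)]
    (P : (∀ j, 𝒳 j) → ℝ) (j : Fin k) : 𝒳 j → ℝ :=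
  fun a => ∑ x : ∀ i, 𝒳 i, if x j = a then P x else 0

/-- The functional `H_{α,θ}(P)`. -/
def Hat {k : ℕ} {𝒳 : Fin k → Type*} [∀ j, Fintype (𝒳 j)] [∀ j, DecidableEq (𝒳 j)]
    (α : ℝ) (θ : Fin k → ℝ) (P : (∀ j, 𝒳 j) → ℝ) : ℝ :=
  sSup { v : ℝ | ∃ Q : (∀ j, 𝒳 j) → ℝ, probVec Q ∧ (∀ x, P x = 0 → Q x = 0) ∧
    v = (∑ j, θ j * shEnt (marg Q j)) - α / (1 - α) * klD Q P }

/-- Rényi entropy of order `α` of a measure on a finite set. -/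
def renyiEnt {X : Type*} [Fintype X] (α : ℝ) (μ : X → ℝ) : ℝ :=
  (1 / (1 - α)) * Real.logb 2 (∑ x, μ x ^ α)

/-!
Write `f_j(Q) = H(Q_j) - α/(1-α) · D(Q‖P)`. Each `f_j` is continuous and concave on the compact
convex set `Δ(supp P)` (entropy is concave and marginals are linear; divergence is convex), and the
theorem is the minimax identity `min_θ max_Q ∑ θ_j f_j(Q) = max_Q min_j f_j(Q)`. One inequality is
weak duality. For the other, if `v` is the right-hand side then `(v + ε, …, v + ε)` lies outside
the closed convex lower set `{y | ∃ Q, y ≤ (f_j(Q))_j}`; a separating hyperplane of a lower set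
has a nonnegative normal, and that normal, rescaled, is a `θ` with `∑ θ_j f_j(Q) < v + ε` for all
`Q`.
-/
theorem IsCompact.isClosed_lowerClosure {α : Type*} [TopologicalSpace α] [AddCommGroup α]
    [PartialOrder α] [IsOrderedAddMonoid α] [IsTopologicalAddGroup α] [ClosedIicTopology α]
    {K : Set α} (hK : IsCompact K) : IsClosed (lowerClosure K : Set α) := by
  have h := (isClosed_Iic (a := (0 : α))).add_left_of_isCompact hK
  rw [← LowerSet.coe_Iic, ← lowerClosure_singleton, add_lowerClosure] at h
  simpa using h

theorem exists_mem_stdSimplex_sum_mul_lt {ι : Type*} [Fintype ι] {A : Set (ι → ℝ)}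
    (hA : IsLowerSet A) (hAc : Convex ℝ A) (hAcl : IsClosed A) (hAne : A.Nonempty)
    {u : ι → ℝ} (hu : u ∉ A) :
    ∃ θ ∈ stdSimplex ℝ ι, ∀ y ∈ A, ∑ j, θ j * y j < ∑ j, θ j * u j := by
  classical
  obtain ⟨g, s, hgA, hgu⟩ := geometric_hahn_banach_closed_point hAc hAcl hu
  set w : ι → ℝ := fun j => g (Pi.single j 1)
  have hg : ∀ y, g y = ∑ j, w j * y j := fun y => by
    conv_lhs => rw [← univ_sum_single y]
    refine (map_sum g _ _).trans (sum_congr rfl fun j _ => ?_)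
    rw [show Pi.single j (y j) = y j • Pi.single j (1 : ℝ) by rw [← Pi.single_smul, smul_eq_mul,
      mul_one], map_smul, smul_eq_mul, mul_comm]
  obtain ⟨y₀, hy₀⟩ := hAne
  have hw : ∀ j, 0 ≤ w j := by
    intro j
    by_contra! hneg
    -- `A` is a lower set, so it contains `y₀ - t • eⱼ` for all `t ≥ 0`; as `w j < 0`, `g`
    -- reaches `s` on this ray
    have hmem : y₀ - ((s - g y₀) / -w j) • Pi.single j 1 ∈ A :=
      hA (sub_le_self _ (smul_nonneg (div_pos (by linarith [hgA y₀ hy₀]) (by linarith)).le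
        (Pi.single_nonneg.2 zero_le_one))) hy₀
    have := hgA _ hmem
    rw [map_sub, map_smul, smul_eq_mul, div_mul_eq_mul_div, div_neg, mul_div_assoc,
      div_self hneg.ne] at this
    linarith
  have hT : 0 < ∑ j, w j := by
    refine (sum_nonneg fun j _ => hw j).lt_of_ne fun h => ?_
    have hw0 : w = 0 :=
      funext fun j => (sum_eq_zero_iff_of_nonneg fun j _ => hw j).1 h.symm j (mem_univ j)
    have h₁ := hgA y₀ hy₀
    simp only [hg, hw0, Pi.zero_apply, zero_mul, sum_const_zero] at h₁ hgu
    linarith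
  refine ⟨fun j => w j / ∑ i, w i, ⟨fun j => div_nonneg (hw j) hT.le, ?_⟩, fun y hy => ?_⟩
  · rw [← sum_div, div_self hT.ne']
  · simp only [div_mul_eq_mul_div, ← sum_div]
    rw [div_lt_div_iff_of_pos_right hT, ← hg, ← hg]
    exact (hgA y hy).trans hgu

theorem convex_lowerClosure_image {ι E : Type*} [AddCommGroup E] [Module ℝ E] {C : Set E}
    (hC : Convex ℝ C) {f : ι → E → ℝ} (hf : ∀ j, ConcaveOn ℝ C (f j)) :
    Convex ℝ (lowerClosure ((fun Q j => f j Q) '' C) : Set (ι → ℝ)) := by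
  simp only [Convex, StarConvex, SetLike.mem_coe, mem_lowerClosure, Set.exists_mem_image]
  rintro y ⟨Q, hQ, hyQ⟩ y' ⟨Q', hQ', hyQ'⟩ a b ha hb hab
  refine ⟨a • Q + b • Q', hC hQ hQ' ha hb hab, fun j => ?_⟩
  calc (a • y + b • y') j = a * y j + b * y' j := rfl
    _ ≤ a * f j Q + b * f j Q' := by gcongr <;> [exact hyQ j; exact hyQ' j]
    _ ≤ f j (a • Q + b • Q') := (hf j).2 hQ hQ' ha hb hab

theorem iInf_le_sum_mul {ι : Type*} [Fintype ι] {θ : ι → ℝ} (hθ : θ ∈ stdSimplex ℝ ι)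
    (x : ι → ℝ) : ⨅ j, x j ≤ ∑ j, θ j * x j :=
  calc ⨅ j, x j = ∑ j, θ j * ⨅ i, x i := by rw [← sum_mul, hθ.2, one_mul]
    _ ≤ ∑ j, θ j * x j := sum_le_sum fun j _ =>
      mul_le_mul_of_nonneg_left (ciInf_le (Finite.bddBelow_range x) j) (hθ.1 j)

theorem sInf_sSup_sum_mul_eq_sSup_iInf {ι E : Type*} [Fintype ι] [Nonempty ι] [AddCommGroup E]
    [Module ℝ E] [TopologicalSpace E] {C : Set E} (hCc : IsCompact C) (hCv : Convex ℝ C)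
    (hC : C.Nonempty) {f : ι → E → ℝ} (hfc : ∀ j, ContinuousOn (f j) C)
    (hfv : ∀ j, ConcaveOn ℝ C (f j)) :
    sInf {v | ∃ θ ∈ stdSimplex ℝ ι, v = sSup ((fun Q => ∑ j, θ j * f j Q) '' C)} =
      sSup ((fun Q => ⨅ j, f j Q) '' C) := by
  set v := sSup ((fun Q => ⨅ j, f j Q) '' C)
  have hbdd (θ : ι → ℝ) : BddAbove ((fun Q => ∑ j, θ j * f j Q) '' C) :=
    hCc.bddAbove_image (continuousOn_finsetSum _ fun j _ => continuousOn_const.mul (hfc j))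
  have hv_bdd : BddAbove ((fun Q => ⨅ j, f j Q) '' C) := by
    obtain ⟨M, hM⟩ := hCc.bddAbove_image (hfc (Classical.arbitrary ι))
    exact ⟨M, Set.forall_mem_image.2 fun Q hQ =>
      (ciInf_le (Finite.bddBelow_range _) _).trans (hM ⟨Q, hQ, rfl⟩)⟩
  have weak : ∀ θ ∈ stdSimplex ℝ ι, v ≤ sSup ((fun Q => ∑ j, θ j * f j Q) '' C) :=
    fun θ hθ => csSup_le (hC.image _) (Set.forall_mem_image.2 fun Q hQ =>
      (iInf_le_sum_mul hθ _).trans (le_csSup (hbdd θ) ⟨Q, hQ, rfl⟩))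
  have strong : ∀ ε > 0, ∃ θ ∈ stdSimplex ℝ ι,
      sSup ((fun Q => ∑ j, θ j * f j Q) '' C) ≤ v + ε := by
    intro ε hε
    have hu : (fun _ => v + ε) ∉ (lowerClosure ((fun Q j => f j Q) '' C) : Set (ι → ℝ)) := by
      rintro ⟨_, ⟨Q, hQ, rfl⟩, hle⟩
      linarith [le_ciInf hle, le_csSup hv_bdd ⟨Q, hQ, rfl⟩]
    obtain ⟨θ, hθ, hlt⟩ := exists_mem_stdSimplex_sum_mul_lt (lowerClosure _).lower
      (convex_lowerClosure_image hCv hfv)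
      (hCc.image_of_continuousOn (continuousOn_pi.2 hfc)).isClosed_lowerClosure
      ((hC.image _).mono subset_lowerClosure) hu
    refine ⟨θ, hθ, csSup_le (hC.image _) (Set.forall_mem_image.2 fun Q hQ => ?_)⟩
    have := hlt _ (subset_lowerClosure ⟨Q, hQ, rfl⟩)
    rw [← sum_mul, hθ.2, one_mul] at this
    exact this.le
  have hlower : v ∈ lowerBounds
      {v | ∃ θ ∈ stdSimplex ℝ ι, v = sSup ((fun Q => ∑ j, θ j * f j Q) '' C)} := by
    rintro _ ⟨θ, hθ, rfl⟩
    exact weak θ hθ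
  refine le_antisymm (le_of_forall_pos_le_add fun ε hε => ?_) (le_csInf ?_ hlower)
  · obtain ⟨θ, hθ, hle⟩ := strong ε hε
    exact (csInf_le ⟨v, hlower⟩ ⟨θ, hθ, rfl⟩).trans hle
  · classical
    exact ⟨_, Pi.single (Classical.arbitrary ι) 1, single_mem_stdSimplex ℝ _, rfl⟩

theorem convexOn_sum {ι E : Type*} [AddCommMonoid E] [Module ℝ E] {s : Set E} (hs : Convex ℝ s)
    (t : Finset ι) {f : ι → E → ℝ} (hf : ∀ i ∈ t, ConvexOn ℝ s (f i)) :
    ConvexOn ℝ s fun x => ∑ i ∈ t, f i x := by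
  classical
  induction t using Finset.induction_on with
  | empty => simpa using convexOn_const 0 hs
  | insert i t hi ih =>
    simp only [sum_insert hi]
    exact (hf i (mem_insert_self i t)).add (ih fun j hj => hf j (mem_insert_of_mem hj))

theorem mul_logb_div_eq {p : ℝ} (hp : p ≠ 0) (q : ℝ) :
    q * Real.logb 2 (q / p) = (Real.log 2)⁻¹ * (q * Real.log q) - q * Real.logb 2 p := by
  rcases eq_or_ne q 0 with rfl | hq
  · simp
  · rw [Real.logb_div hq hp, Real.logb]
    ring

theorem convexOn_mul_logb_div (p : ℝ) :
    ConvexOn ℝ (Set.Ici 0) fun q : ℝ => q * Real.logb 2 (q / p) := by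
  rcases eq_or_ne p 0 with rfl | hp
  -- `q / 0 = 0` and `logb 2 0 = 0`: the function is identically zero
  · simpa using convexOn_const 0 (convex_Ici (0 : ℝ))
  · simp only [mul_logb_div_eq hp]
    exact (Real.strictConvexOn_mul_log.convexOn.smul (by positivity)).sub
      ((LinearMap.mulRight ℝ (Real.logb 2 p)).concaveOn (convex_Ici 0))

theorem continuous_mul_logb_div (p : ℝ) : Continuous fun q : ℝ => q * Real.logb 2 (q / p) := by
  rcases eq_or_ne p 0 with rfl | hp
  · simpa using continuous_const
  · simp only [mul_logb_div_eq hp]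
    fun_prop

section Entropy

variable {X : Type*} [Fintype X]

theorem convexOn_klD (P : X → ℝ) : ConvexOn ℝ (Set.Ici 0) fun Q : X → ℝ => klD Q P :=
  convexOn_sum (convex_Ici 0) _ fun x _ =>
    ((convexOn_mul_logb_div (P x)).comp_linearMap (LinearMap.proj x : (X → ℝ) →ₗ[ℝ] ℝ)).subset
      (fun _ hQ => Set.mem_Ici.2 (hQ x)) (convex_Ici (0 : X → ℝ))

theorem continuous_klD (P : X → ℝ) : Continuous fun Q : X → ℝ => klD Q P :=
  continuous_finsetSum _ fun x _ => (continuous_mul_logb_div (P x)).comp (continuous_apply x)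

theorem shEnt_eq_neg_klD_one (Q : X → ℝ) : shEnt Q = -klD Q 1 := by
  simp [shEnt, klD]

theorem concaveOn_shEnt : ConcaveOn ℝ (Set.Ici 0) (shEnt : (X → ℝ) → ℝ) := by
  rw [show shEnt = _ from funext shEnt_eq_neg_klD_one]
  exact (convexOn_klD 1).neg

theorem continuous_shEnt : Continuous (shEnt : (X → ℝ) → ℝ) := by
  rw [show shEnt = _ from funext shEnt_eq_neg_klD_one]
  exact (continuous_klD 1).neg

def simplexOnSupp (P : X → ℝ) : Set (X → ℝ) :=
  stdSimplex ℝ X ∩ {Q | ∀ x, P x = 0 → Q x = 0}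

theorem image_simplexOnSupp {β : Type*} (P : X → ℝ) (g : (X → ℝ) → β) :
    g '' simplexOnSupp P = {v | ∃ Q, probVec Q ∧ (∀ x, P x = 0 → Q x = 0) ∧ v = g Q} := by
  ext v
  simp only [Set.mem_image, Set.mem_ofPred_eq, simplexOnSupp, Set.mem_inter_iff, and_assoc,
    eq_comm]
  rfl

theorem simplexOnSupp_subset_Ici (P : X → ℝ) : simplexOnSupp P ⊆ Set.Ici 0 :=
  fun _ hQ => hQ.1.1

theorem convex_simplexOnSupp (P : X → ℝ) : Convex ℝ (simplexOnSupp P) :=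
  (convex_stdSimplex ℝ X).inter fun _ hQ _ hQ' _ _ _ _ _ x hx => by simp [hQ x hx, hQ' x hx]

theorem isCompact_simplexOnSupp (P : X → ℝ) : IsCompact (simplexOnSupp P) := by
  refine (isCompact_stdSimplex ℝ X).inter_right ?_
  simp only [Set.ofPred_forall]
  exact isClosed_iInter fun x => isClosed_iInter fun _ =>
    isClosed_eq (continuous_apply x) continuous_const

theorem simplexOnSupp_nonempty [DecidableEq X] {P : X → ℝ} (hP : P ≠ 0) :
    (simplexOnSupp P).Nonempty := by
  obtain ⟨x₀, hx₀⟩ := Function.ne_iff.1 hP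
  refine ⟨Pi.single x₀ 1, single_mem_stdSimplex ℝ x₀, fun x hx => ?_⟩
  exact Pi.single_eq_of_ne (by rintro rfl; exact hx₀ hx) 1

end Entropy

section Marginal

variable {k : ℕ} {𝒳 : Fin k → Type*} [∀ j, Fintype (𝒳 j)] [∀ j, DecidableEq (𝒳 j)]

def margLinearMap (j : Fin k) : ((∀ i, 𝒳 i) → ℝ) →ₗ[ℝ] 𝒳 j → ℝ where
  toFun Q := marg Q j
  map_add' Q Q' := by
    ext a
    simp only [marg, Pi.add_apply, ← sum_add_distrib, ite_add_ite, add_zero]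
  map_smul' c Q := by
    ext a
    simp only [marg, Pi.smul_apply, smul_eq_mul, mul_sum, mul_ite, mul_zero, RingHom.id_apply]

theorem marg_nonneg {Q : (∀ i, 𝒳 i) → ℝ} (hQ : 0 ≤ Q) (j : Fin k) : 0 ≤ marg Q j :=
  fun a => sum_nonneg fun x _ => by split_ifs <;> [exact hQ x; exact le_rfl]

def penalizedMargEnt (c : ℝ) (P : (∀ i, 𝒳 i) → ℝ) (j : Fin k) (Q : (∀ i, 𝒳 i) → ℝ) : ℝ :=
  shEnt (marg Q j) - c * klD Q P

theorem continuous_penalizedMargEnt (c : ℝ) (P : (∀ i, 𝒳 i) → ℝ) (j : Fin k) :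
    Continuous (penalizedMargEnt c P j) :=
  (continuous_shEnt.comp (margLinearMap j).continuous_of_finiteDimensional).sub
    (continuous_const.mul (continuous_klD P))

theorem concaveOn_penalizedMargEnt {c : ℝ} (hc : 0 ≤ c) (P : (∀ i, 𝒳 i) → ℝ) (j : Fin k) :
    ConcaveOn ℝ (Set.Ici 0) (penalizedMargEnt c P j) :=
  ((concaveOn_shEnt.comp_linearMap (margLinearMap j)).subset (fun _ hQ => marg_nonneg hQ j)
    (convex_Ici 0)).sub ((convexOn_klD P).smul hc)

theorem iInf_penalizedMargEnt [Nonempty (Fin k)] (c : ℝ) (P Q : (∀ i, 𝒳 i) → ℝ) :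
    ⨅ j, penalizedMargEnt c P j Q = (⨅ j, shEnt (marg Q j)) - c * klD Q P :=
  ((OrderIso.subRight _).map_ciInf (Finite.bddBelow_range _)).symm

theorem Hat_eq_sSup_image (α : ℝ) {θ : Fin k → ℝ} (hθ : θ ∈ stdSimplex ℝ (Fin k))
    (P : (∀ i, 𝒳 i) → ℝ) :
    Hat α θ P =
      sSup ((fun Q => ∑ j, θ j * penalizedMargEnt (α / (1 - α)) P j Q) '' simplexOnSupp P) := by
  simp only [image_simplexOnSupp, Hat, penalizedMargEnt, mul_sub, sum_sub_distrib, ← sum_mul,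
    hθ.2, one_mul]

end Marginal

theorem stmt18_general {k : ℕ} (hk : 1 ≤ k) (𝒳 : Fin k → Type)
    [∀ i, Fintype (𝒳 i)] [∀ i, DecidableEq (𝒳 i)]
    (α : ℝ) (hα : α ∈ Set.Ioo (0 : ℝ) 1)
    (P : (∀ i, 𝒳 i) → ℝ) (hPne : P ≠ 0) :
    sInf { v : ℝ | ∃ θ : Fin k → ℝ, probVec θ ∧ v = Hat α θ P } =
      sSup { v : ℝ | ∃ Q : (∀ i, 𝒳 i) → ℝ, probVec Q ∧ (∀ x, P x = 0 → Q x = 0) ∧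
        v = (⨅ j : Fin k, shEnt (marg Q j)) - α / (1 - α) * klD Q P } := by
  have : Nonempty (Fin k) := ⟨⟨0, hk⟩⟩
  have hc : 0 ≤ α / (1 - α) := div_nonneg hα.1.le (sub_pos.2 hα.2).le
  calc sInf { v : ℝ | ∃ θ : Fin k → ℝ, probVec θ ∧ v = Hat α θ P }
      = sInf {v | ∃ θ ∈ stdSimplex ℝ (Fin k), v = sSup
          ((fun Q => ∑ j, θ j * penalizedMargEnt (α / (1 - α)) P j Q) '' simplexOnSupp P)} := by
        congr 1; ext v
        exact exists_congr fun θ => and_congr_right fun hθ => by rw [Hat_eq_sSup_image α hθ P]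
    _ = sSup ((fun Q => ⨅ j, penalizedMargEnt (α / (1 - α)) P j Q) '' simplexOnSupp P) :=
        sInf_sSup_sum_mul_eq_sSup_iInf (isCompact_simplexOnSupp P) (convex_simplexOnSupp P)
          (simplexOnSupp_nonempty hPne)
          (fun j => (continuous_penalizedMargEnt _ P j).continuousOn)
          (fun j => (concaveOn_penalizedMargEnt hc P j).subset (simplexOnSupp_subset_Ici P)
            (convex_simplexOnSupp P))
    _ = _ := by simp only [iInf_penalizedMargEnt, image_simplexOnSupp]

/-- minimax identity,
`min_{θ ∈ Δ([k])} H_{α,θ}(P) = max_{Q ∈ Δ(supp P)} [min_j H(Q_j) − (α/(1−α)) D(Q‖P)]`. -/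
theorem stmt18 {k : ℕ} (hk : 1 ≤ k) (𝒳 : Fin k → Type)
    [∀ i, Fintype (𝒳 i)] [∀ i, DecidableEq (𝒳 i)]
    (α : ℝ) (hα : α ∈ Set.Ioo (0 : ℝ) 1)
    (P : (∀ i, 𝒳 i) → ℝ) (hP0 : ∀ x, 0 ≤ P x) (hPne : P ≠ 0) :
    sInf { v : ℝ | ∃ θ : Fin k → ℝ, probVec θ ∧ v = Hat α θ P } =
      sSup { v : ℝ | ∃ Q : (∀ i, 𝒳 i) → ℝ, probVec Q ∧ (∀ x, P x = 0 → Q x = 0) ∧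
        v = (⨅ j : Fin k, shEnt (marg Q j)) - α / (1 - α) * klD Q P } :=
  stmt18_general hk 𝒳 α hα P hPne
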